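/- arXiv:2011.08166 — 2 statements merged into one kernel-verified Lean document; each statement's English description precedes it below -/
import Mathlib

section
/- Let x ∈ ℝⁿ, let B be a symmetric positive semidefinite n×n matrix with operator norm ‖B‖ ≤ M, let α > 0, set H = B + αI, and let ν ∈ [0,1). Suppose x̂ ∈ ℝⁿ is such that the residual e = x̂ − Prox_g(x̂ − ∇f(x) − H(x̂ − x)) satisfies ‖e‖ ≤ ν‖𝒢(x)‖. Then ‖𝒢(x)‖ ≤ ((1 + M + α)/(1 − ν)) · ‖x̂ − x‖. -/
open scoped RealInnerProductSpace
open Metric Set Filter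

noncomputable section

abbrev En (n : ℕ) : Type := EuclideanSpace ℝ (Fin n)

/-- Convex subdifferential of an extended-real-valued function `g` at `x`. -/
def ESubdiff {n : ℕ} (g : En n → EReal) (x : En n) : Set (En n) :=
  {v | ∀ y, g x + ((⟪v, y - x⟫ : ℝ) : EReal) ≤ g y}

/-- `g` is proper: it never takes the value `-∞` and is finite somewhere. -/
def ProperFun {n : ℕ} (g : En n → EReal) : Prop :=
  (∀ x, g x ≠ ⊥) ∧ ∃ x, g x ≠ ⊤

/-- Convexity for extended-real-valued functions. -/
def EConvexOn {n : ℕ} (g : En n → EReal) : Prop :=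
  ∀ x y : En n, ∀ a b : ℝ, 0 ≤ a → 0 ≤ b → a + b = 1 →
    g (a • x + b • y) ≤ (a : EReal) * g x + (b : EReal) * g y

/-- `p` minimizes `y ↦ g y + ‖y - u‖ ^ 2 / 2`. -/
def IsProxPt {n : ℕ} (g : En n → EReal) (u p : En n) : Prop :=
  ∀ y, g p + ((‖p - u‖ ^ 2 / 2 : ℝ) : EReal) ≤ g y + ((‖y - u‖ ^ 2 / 2 : ℝ) : EReal)

/-- `prox` maps each `u` to the unique minimizer of `y ↦ g y + ‖y - u‖ ^ 2 / 2`. -/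
def IsProxMap {n : ℕ} (g : En n → EReal) (prox : En n → En n) : Prop :=
  ∀ u, IsProxPt g u (prox u) ∧ ∀ p, IsProxPt g u p → p = prox u

/-- The solution set `𝒳* = argmin (f + g)`. -/
def ArgminSet {n : ℕ} (f : En n → ℝ) (g : En n → EReal) : Set (En n) :=
  {x | ∀ y, (f x : EReal) + g x ≤ (f y : EReal) + g y}

/-- The prox-gradient mapping `𝒢 x = x - Prox_g (x - ∇f x)`. -/
def Gmap {n : ℕ} (f' prox : En n → En n) (x : En n) : En n :=
  x - prox (x - f' x)

/-!
The prox-point `p = Prox_g u` satisfies `u - p ∈ ∂g(p)`, and monotonicity of `∂g` makes `Prox_g`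
firmly nonexpansive. Put `s = x̂ - x`, `Hs = B s + α s`, `u = x - ∇f(x)` and
`d = Prox_g(u + s - Hs) - Prox_g u`. Firm nonexpansiveness gives `‖d‖² ≤ ⟪d, s - Hs⟫`, which
together with `⟪s, Hs⟫ ≥ 0` yields `‖d - s‖ ≤ ‖s + Hs‖ ≤ (1 + M + α) ‖s‖`. Since
`𝒢(x) = (d - s) + e`, we get `‖𝒢(x)‖ ≤ (1 + M + α) ‖s‖ + ν ‖𝒢(x)‖`.
-/

open scoped Topology

lemma norm_sub_le_norm_add_of_sq_le_inner {E : Type*} [NormedAddCommGroup E]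
    [InnerProductSpace ℝ E] {d s h : E} (hd : ‖d‖ ^ 2 ≤ ⟪d, s - h⟫) (hsh : 0 ≤ ⟪s, h⟫) :
    ‖d - s‖ ≤ ‖s + h‖ := by
  have hsq : ‖d - s‖ ^ 2 ≤ ‖d - s‖ * ‖s + h‖ :=
    calc ‖d - s‖ ^ 2 = ‖d‖ ^ 2 - 2 * ⟪d, s⟫ + ‖s‖ ^ 2 := norm_sub_sq_real d s
      _ ≤ ⟪s - d, s + h⟫ := by
          rw [inner_sub_right] at hd
          rw [inner_sub_left, inner_add_right, inner_add_right, real_inner_self_eq_norm_sq]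
          linarith
      _ ≤ ‖s - d‖ * ‖s + h‖ := real_inner_le_norm _ _
      _ = ‖d - s‖ * ‖s + h‖ := by rw [norm_sub_rev]
  nlinarith [norm_nonneg (d - s), norm_nonneg (s + h)]

lemma ESubdiff.inner_sub_nonneg {n : ℕ} {g : En n → EReal} {p₁ p₂ v₁ v₂ : En n} {a₁ a₂ : ℝ}
    (hv₁ : v₁ ∈ ESubdiff g p₁) (hv₂ : v₂ ∈ ESubdiff g p₂) (ha₁ : g p₁ = a₁) (ha₂ : g p₂ = a₂) :
    0 ≤ ⟪v₂ - v₁, p₂ - p₁⟫ := by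
  have h₁ := hv₁ p₂
  have h₂ := hv₂ p₁
  rw [ha₁, ha₂, ← EReal.coe_add, EReal.coe_le_coe_iff] at h₁ h₂
  rw [← neg_sub p₂ p₁, inner_neg_right] at h₂
  rw [inner_sub_left]
  linarith

lemma norm_add_apply_add_smul_le {E : Type*} [NormedAddCommGroup E] [NormedSpace ℝ E]
    (B : E →L[ℝ] E) {M α : ℝ} (hBM : ‖B‖ ≤ M) (hα : 0 ≤ α) (s : E) :
    ‖s + (B s + α • s)‖ ≤ (1 + M + α) * ‖s‖ :=
  calc ‖s + (B s + α • s)‖ ≤ ‖s‖ + (‖B s‖ + ‖α • s‖) := norm_add_le_of_le le_rfl (norm_add_le _ _)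
    _ ≤ ‖s‖ + (M * ‖s‖ + α * ‖s‖) := by
        rw [norm_smul_of_nonneg hα]
        gcongr
        exact B.le_of_opNorm_le hBM s
    _ = (1 + M + α) * ‖s‖ := by ring

namespace IsProxPt

variable {n : ℕ} {g : En n → EReal} {u p : En n}

lemma ne_top (hg : ProperFun g) (h : IsProxPt g u p) : g p ≠ ⊤ := by
  obtain ⟨y, hy⟩ := hg.2
  intro htop
  have hlt : g y + ((‖y - u‖ ^ 2 / 2 : ℝ) : EReal) < ⊤ := EReal.add_lt_top hy (EReal.coe_ne_top _)
  have hle := h y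
  rw [htop, EReal.top_add_coe] at hle
  exact hlt.not_ge hle

lemma sub_mem_eSubdiff (hg : ProperFun g) (hconv : EConvexOn g) (h : IsProxPt g u p) :
    u - p ∈ ESubdiff g p := by
  intro y
  by_cases hy : g y = ⊤
  · simp [hy]
  set a := (g p).toReal
  set b := (g y).toReal
  have hpa : g p = a := (EReal.coe_toReal (h.ne_top hg) (hg.1 p)).symm
  have hyb : g y = b := (EReal.coe_toReal hy (hg.1 y)).symm
  rw [hpa, hyb, ← EReal.coe_add, EReal.coe_le_coe_iff]
  -- Minimality against `p + t (y - p)` and convexity give this bound for `t ∈ (0, 1)`.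
  have hstep : ∀ t ∈ Ioo (0 : ℝ) 1, a + ⟪u - p, y - p⟫ ≤ b + t * (‖y - p‖ ^ 2 / 2) := by
    rintro t ⟨ht0, ht1⟩
    have hconv_t := hconv p y (1 - t) t (by linarith) ht0.le (by ring)
    have hmin := h ((1 - t) • p + t • y)
    rw [hpa, hyb, ← EReal.coe_mul, ← EReal.coe_mul, ← EReal.coe_add] at hconv_t
    rw [hpa] at hmin
    have hreal := hmin.trans (add_le_add_left hconv_t _)
    rw [← EReal.coe_add, ← EReal.coe_add, EReal.coe_le_coe_iff] at hreal
    have hnorm : ‖(1 - t) • p + t • y - u‖ ^ 2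
        = ‖p - u‖ ^ 2 - 2 * t * ⟪u - p, y - p⟫ + t ^ 2 * ‖y - p‖ ^ 2 := by
      rw [show (1 - t) • p + t • y - u = (p - u) + t • (y - p) by module, norm_add_sq_real,
        real_inner_smul_right, norm_smul, Real.norm_eq_abs, abs_of_pos ht0,
        ← neg_sub u p, inner_neg_left]
      ring
    rw [hnorm] at hreal
    nlinarith
  have hlim : Tendsto (fun t : ℝ => b + t * (‖y - p‖ ^ 2 / 2)) (𝓝[>] 0) (𝓝 b) := by
    have : Continuous fun t : ℝ => b + t * (‖y - p‖ ^ 2 / 2) := by fun_prop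
    simpa using (this.tendsto 0).mono_left nhdsWithin_le_nhds
  exact ge_of_tendsto hlim (Filter.mem_of_superset (Ioo_mem_nhdsGT one_pos) hstep)

lemma norm_sub_sq_le_inner (hg : ProperFun g) (hconv : EConvexOn g) {u₁ u₂ p₁ p₂ : En n}
    (h₁ : IsProxPt g u₁ p₁) (h₂ : IsProxPt g u₂ p₂) :
    ‖p₂ - p₁‖ ^ 2 ≤ ⟪p₂ - p₁, u₂ - u₁⟫ := by
  have hmono := ESubdiff.inner_sub_nonneg (h₁.sub_mem_eSubdiff hg hconv)
    (h₂.sub_mem_eSubdiff hg hconv) (EReal.coe_toReal (h₁.ne_top hg) (hg.1 p₁)).symm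
    (EReal.coe_toReal (h₂.ne_top hg) (hg.1 p₂)).symm
  rw [show u₂ - p₂ - (u₁ - p₁) = (u₂ - u₁) - (p₂ - p₁) by abel, inner_sub_left,
    real_inner_self_eq_norm_sq, real_inner_comm] at hmono
  linarith

end IsProxPt

theorem norm_Gmap_le_of_residual_general {n : ℕ}
    (f' : En n → En n) (g : En n → EReal) (prox : En n → En n)
    (hgproper : ProperFun g) (hgconv : EConvexOn g)
    (hprox : IsProxMap g prox)
    (x xhat : En n) (B : En n →L[ℝ] En n)
    (hBpsd : ∀ u : En n, 0 ≤ ⟪B u, u⟫)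
    (M : ℝ) (hBM : ‖B‖ ≤ M)
    (α : ℝ) (hα : 0 < α)
    (ν : ℝ) (hν1 : ν < 1)
    (hres : ‖xhat - prox (xhat - f' x - (B (xhat - x) + α • (xhat - x)))‖ ≤
      ν * ‖Gmap f' prox x‖) :
    ‖Gmap f' prox x‖ ≤ ((1 + M + α) / (1 - ν)) * ‖xhat - x‖ := by
  set s := xhat - x
  set p₁ := prox (x - f' x)
  set p₂ := prox (xhat - f' x - (B s + α • s))
  have hfirm := IsProxPt.norm_sub_sq_le_inner hgproper hgconv (hprox (x - f' x)).1
    (hprox (xhat - f' x - (B s + α • s))).1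
  rw [show xhat - f' x - (B s + α • s) - (x - f' x) = s - (B s + α • s) by
    simp only [s]; abel] at hfirm
  have hpos : 0 ≤ ⟪s, B s + α • s⟫ := by
    rw [inner_add_right, real_inner_smul_right, real_inner_comm, real_inner_self_eq_norm_sq]
    have := hBpsd s
    positivity
  have hd := norm_sub_le_norm_add_of_sq_le_inner hfirm hpos
  have hH := norm_add_apply_add_smul_le B hBM hα.le s
  have hG : ‖Gmap f' prox x‖ ≤ ‖p₂ - p₁ - s‖ + ‖xhat - p₂‖ := by
    rw [show Gmap f' prox x = (p₂ - p₁ - s) + (xhat - p₂) by simp only [Gmap, s, p₁, p₂]; abel]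
    exact norm_add_le _ _
  rw [div_mul_eq_mul_div, le_div_iff₀ (sub_pos.2 hν1)]
  linarith

/-- If `H = B + αI` with `B` symmetric psd, `‖B‖ ≤ M`, `α > 0`, and the
residual `e = xhat - Prox_g(xhat - ∇f(x) - H(xhat - x))` satisfies `‖e‖ ≤ ν ‖𝒢(x)‖` with
`ν ∈ [0,1)`, then `‖𝒢(x)‖ ≤ ((1 + M + α)/(1 - ν)) ‖xhat - x‖`. -/
theorem norm_Gmap_le_of_residual {n : ℕ}
    (f : En n → ℝ) (f' : En n → En n) (g : En n → EReal) (prox : En n → En n)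
    (hfconv : ConvexOn ℝ Set.univ f)
    (hgrad : ∀ x, HasGradientAt f (f' x) x)
    (hgradcont : Continuous f')
    (hgproper : ProperFun g) (hglsc : LowerSemicontinuous g) (hgconv : EConvexOn g)
    (hprox : IsProxMap g prox)
    (x xhat : En n) (B : En n →L[ℝ] En n)
    (hBsymm : ∀ u v : En n, ⟪B u, v⟫ = ⟪u, B v⟫)
    (hBpsd : ∀ u : En n, 0 ≤ ⟪B u, u⟫)
    (M : ℝ) (hBM : ‖B‖ ≤ M)
    (α : ℝ) (hα : 0 < α)
    (ν : ℝ) (hν0 : 0 ≤ ν) (hν1 : ν < 1)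
    (hres : ‖xhat - prox (xhat - f' x - (B (xhat - x) + α • (xhat - x)))‖ ≤
      ν * ‖Gmap f' prox x‖) :
    ‖Gmap f' prox x‖ ≤ ((1 + M + α) / (1 - ν)) * ‖xhat - x‖ :=
  norm_Gmap_le_of_residual_general f' g prox hgproper hgconv hprox x xhat B hBpsd M hBM α hα ν hν1
    hres
end
end

section
/- Let x̄ ∈ 𝒳* and q ∈ (0,1]. Assume: (a) the mapping x ↦ ∇f(x) + ∂g(x) is metrically q-subregular at (x̄, 0); (b) the Hessian ∇²f is Lipschitz continuous on a neighborhood of x̄. Fix constants c, ᾱ, C₁ > 0, M ≥ 0, ν ∈ [0,1), ρ ∈ (0,q], and ϱ ≥ ρ. Then there exist ε > 0 and c₁ > 0 such that: for every x with ‖x − x̄‖ < ε and 𝒢(x) ≠ 0, every symmetric positive semidefinite matrix B with ‖B‖ ≤ M and ‖B − ∇²f(x)‖ ≤ C₁ · dist(x; 𝒳*), and every x̂ ∈ ℝⁿ whose residual e = x̂ − Prox_g(x̂ − ∇f(x) − H(x̂ − x)) with α = min{ᾱ, c‖𝒢(x)‖^ρ} and H = B + αI satisfies ‖e‖ ≤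 ν · min{‖𝒢(x)‖, ‖𝒢(x)‖^{1+ϱ}}, one has ‖x̂ − x‖ ≤ c₁ · dist(x; 𝒳*). -/
open scoped RealInnerProductSpace
open Metric Set Filter

noncomputable section

/-- helper: A ≤ C * t for all small positive t implies A ≤ 0 -/
lemma le_zero_of_forall_le_mul {A C : ℝ} (h : ∀ t : ℝ, 0 < t → t ≤ 1 → A ≤ C * t) : A ≤ 0 := by
  by_contra hA
  push_neg at hA
  have hC : 0 < C := lt_of_lt_of_le hA (by simpa using h 1 one_pos le_rfl)
  have ht : 0 < min 1 (A / (2 * C)) := lt_min one_pos (by positivity)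
  have := h _ ht (min_le_left _ _)
  have h2 : C * min 1 (A / (2 * C)) ≤ C * (A / (2 * C)) :=
    mul_le_mul_of_nonneg_left (min_le_right _ _) hC.le
  have h3 : C * (A / (2 * C)) = A / 2 := by field_simp
  linarith

lemma subdiff_ne_top {n : ℕ} {g : En n → EReal} (hp : ProperFun g)
    {x v : En n} (h : v ∈ ESubdiff g x) : g x ≠ ⊤ := by
  obtain ⟨x₀, hx₀⟩ := hp.2
  intro htop
  have h0 := h x₀
  rw [htop, EReal.top_add_coe] at h0
  exact hx₀ (top_le_iff.mp h0)

lemma mem_subdiff_of_isProxPt {n : ℕ} {g : En n → EReal} (hp : ProperFun g) (hc : EConvexOn g)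
    {u p : En n} (h : IsProxPt g u p) : (u - p) ∈ ESubdiff g p := by
  obtain ⟨x₀, hx₀⟩ := hp.2
  have hpt : g p ≠ ⊤ := by
    intro htop
    have h0 := h x₀
    rw [htop, EReal.top_add_coe] at h0
    have : g x₀ + ((‖x₀ - u‖ ^ 2 / 2 : ℝ) : EReal) < ⊤ :=
      EReal.add_lt_top hx₀ (EReal.coe_ne_top _)
    exact this.ne (top_le_iff.mp h0)
  have hpb : g p ≠ ⊥ := hp.1 p
  set a := (g p).toReal with ha
  have hga : g p = (a : EReal) := (EReal.coe_toReal hpt hpb).symm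
  intro y
  rcases eq_or_ne (g y) ⊤ with hyt | hyt
  · rw [hyt]; exact le_top
  have hyb : g y ≠ ⊥ := hp.1 y
  set b := (g y).toReal with hb
  have hgb : g y = (b : EReal) := (EReal.coe_toReal hyt hyb).symm
  rw [hga, hgb, ← EReal.coe_add, EReal.coe_le_coe_iff]
  have key : ∀ t : ℝ, 0 < t → t ≤ 1 →
      a + ⟪u - p, y - p⟫ - b ≤ (‖y - p‖ ^ 2 / 2) * t := by
    intro t ht0 ht1
    have hyt' : p + t • (y - p) = (1 - t) • p + t • y := by
      module
    have hconv := hc p y (1 - t) t (by linarith) ht0.le (by ring)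
    rw [hga, hgb] at hconv
    have hconv' : g (p + t • (y - p)) ≤ (((1 - t) * a + t * b : ℝ) : EReal) := by
      rw [hyt', EReal.coe_add, EReal.coe_mul, EReal.coe_mul]; exact hconv
    have hmin := h (p + t • (y - p))
    have hnorm : ‖p + t • (y - p) - u‖ ^ 2
        = ‖p - u‖ ^ 2 + 2 * (t * ⟪p - u, y - p⟫) + t ^ 2 * ‖y - p‖ ^ 2 := by
      have : p + t • (y - p) - u = (p - u) + t • (y - p) := by abel
      rw [this, norm_add_sq_real, real_inner_smul_right, norm_smul]
      simp [mul_pow, abs_of_pos ht0]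
    have hchain : (a : EReal) + ((‖p - u‖ ^ 2 / 2 : ℝ) : EReal)
        ≤ (((1 - t) * a + t * b + ‖p + t • (y - p) - u‖ ^ 2 / 2 : ℝ) : EReal) := by
      rw [hga] at hmin
      refine le_trans hmin ?_
      rw [EReal.coe_add]
      exact add_le_add_left hconv' _
    rw [← EReal.coe_add, EReal.coe_le_coe_iff] at hchain
    rw [hnorm] at hchain
    have hip : ⟪u - p, y - p⟫ = -⟪p - u, y - p⟫ := by
      rw [← inner_neg_left]; congr 1; abel
    rw [hip]
    nlinarith [sq_nonneg t, sq_nonneg (‖y - p‖)]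
  have := le_zero_of_forall_le_mul key
  linarith

lemma subdiff_mono {n : ℕ} {g : En n → EReal} (hp : ProperFun g)
    {x₁ x₂ v₁ v₂ : En n} (h₁ : v₁ ∈ ESubdiff g x₁) (h₂ : v₂ ∈ ESubdiff g x₂) :
    0 ≤ ⟪v₁ - v₂, x₁ - x₂⟫ := by
  have ht₁ := subdiff_ne_top hp h₁
  have ht₂ := subdiff_ne_top hp h₂
  have hb₁ := hp.1 x₁
  have hb₂ := hp.1 x₂
  set a₁ := (g x₁).toReal
  set a₂ := (g x₂).toReal
  have hg₁ : g x₁ = (a₁ : EReal) := (EReal.coe_toReal ht₁ hb₁).symm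
  have hg₂ : g x₂ = (a₂ : EReal) := (EReal.coe_toReal ht₂ hb₂).symm
  have e₁ := h₁ x₂
  have e₂ := h₂ x₁
  rw [hg₁, hg₂, ← EReal.coe_add, EReal.coe_le_coe_iff] at e₁
  rw [hg₁, hg₂, ← EReal.coe_add, EReal.coe_le_coe_iff] at e₂
  have hip : ⟪v₁ - v₂, x₁ - x₂⟫ = -⟪v₁, x₂ - x₁⟫ - ⟪v₂, x₁ - x₂⟫ := by
    rw [inner_sub_left]
    have : ⟪v₁, x₂ - x₁⟫ = -⟪v₁, x₁ - x₂⟫ := by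
      rw [← inner_neg_right]; congr 1; abel
    rw [this]; ring
  rw [hip]; linarith

lemma smooth_upper {n : ℕ} {f : En n → ℝ} {f' : En n → En n}
    (hgrad : ∀ x, HasGradientAt f (f' x) x)
    {L₁ : ℝ} (hL : 0 ≤ L₁) (hlip : ∀ x y : En n, ‖f' x - f' y‖ ≤ L₁ * ‖x - y‖) (x y : En n) :
    f y ≤ f x + ⟪f' x, y - x⟫ + L₁ * ‖y - x‖ ^ 2 := by
  set φ : En n → ℝ := fun z => f z - ⟪f' x, z⟫ with hφ
  have hder : ∀ z ∈ segment ℝ x y, HasFDerivWithinAt φ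
      ((InnerProductSpace.toDual ℝ (En n)) (f' z) - (InnerProductSpace.toDual ℝ (En n)) (f' x))
      (segment ℝ x y) z := by
    intro z _
    exact (((hgrad z).hasFDerivAt).sub
      ((InnerProductSpace.toDual ℝ (En n)) (f' x)).hasFDerivAt).hasFDerivWithinAt
  have hbound : ∀ z ∈ segment ℝ x y,
      ‖(InnerProductSpace.toDual ℝ (En n)) (f' z) - (InnerProductSpace.toDual ℝ (En n)) (f' x)‖
        ≤ L₁ * ‖y - x‖ := by
    intro z hz
    rw [← map_sub, (InnerProductSpace.toDual ℝ (En n)).norm_map]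
    refine le_trans (hlip z x) (mul_le_mul_of_nonneg_left ?_ hL)
    obtain ⟨a, b, ha, hb, hab, rfl⟩ := hz
    have : a • x + b • y - x = b • (y - x) := by
      have hx1 : a = 1 - b := by linarith
      rw [hx1]; module
    rw [this, norm_smul]
    simpa [abs_of_nonneg hb] using mul_le_of_le_one_left (norm_nonneg _) (by linarith : b ≤ 1)
  have := Convex.norm_image_sub_le_of_norm_hasFDerivWithin_le hder hbound
    (convex_segment x y) (left_mem_segment ℝ x y) (right_mem_segment ℝ x y)
  have habs : φ y - φ x ≤ L₁ * ‖y - x‖ * ‖y - x‖ :=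
    le_trans (le_abs_self _) (by simpa [Real.norm_eq_abs] using this)
  have hφval : φ y - φ x = f y - f x - ⟪f' x, y - x⟫ := by
    simp only [hφ, inner_sub_right]; ring
  nlinarith [sq_nonneg (‖y - x‖)]

lemma taylor_grad {n : ℕ} {f' : En n → En n} {f'' : En n → En n →L[ℝ] En n}
    (hhess : ∀ x, HasFDerivAt f' (f'' x) x) {δ L₂ : ℝ} {xb : En n} (hL₂ : 0 ≤ L₂)
    (hlip2 : ∀ x ∈ ball xb δ, ∀ y ∈ ball xb δ, ‖f'' x - f'' y‖ ≤ L₂ * ‖x - y‖)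
    {x y : En n} (hx : x ∈ ball xb δ) (hy : y ∈ ball xb δ) :
    ‖f' y - f' x - f'' x (y - x)‖ ≤ L₂ * ‖y - x‖ ^ 2 := by
  set φ : En n → En n := fun z => f' z - f'' x z with hφ
  have hseg : segment ℝ x y ⊆ ball xb δ := (convex_ball xb δ).segment_subset hx hy
  have hder : ∀ z ∈ segment ℝ x y,
      HasFDerivWithinAt φ (f'' z - f'' x) (segment ℝ x y) z := by
    intro z _
    exact ((hhess z).sub (f'' x).hasFDerivAt).hasFDerivWithinAt
  have hbound : ∀ z ∈ segment ℝ x y, ‖f'' z - f'' x‖ ≤ L₂ * ‖y - x‖ := by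
    intro z hz
    refine le_trans (hlip2 z (hseg hz) x hx) (mul_le_mul_of_nonneg_left ?_ hL₂)
    obtain ⟨a, b, ha, hb, hab, rfl⟩ := hz
    have : a • x + b • y - x = b • (y - x) := by
      have hx1 : a = 1 - b := by linarith
      rw [hx1]; module
    rw [this, norm_smul]
    simpa [abs_of_nonneg hb] using mul_le_of_le_one_left (norm_nonneg _) (by linarith : b ≤ 1)
  have key := Convex.norm_image_sub_le_of_norm_hasFDerivWithin_le hder hbound
    (convex_segment x y) (left_mem_segment ℝ x y) (right_mem_segment ℝ x y)
  have hφval : φ y - φ x = f' y - f' x - f'' x (y - x) := by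
    simp only [hφ, map_sub]; abel
  rw [hφval] at key
  calc ‖f' y - f' x - f'' x (y - x)‖ ≤ L₂ * ‖y - x‖ * ‖y - x‖ := key
    _ = L₂ * ‖y - x‖ ^ 2 := by ring

lemma argmin_subdiff {n : ℕ} {f : En n → ℝ} {f' : En n → En n} {g : En n → EReal}
    (hp : ProperFun g) (hc : EConvexOn g)
    (hgrad : ∀ x, HasGradientAt f (f' x) x)
    {L₁ : ℝ} (hL : 0 ≤ L₁) (hlip : ∀ x y : En n, ‖f' x - f' y‖ ≤ L₁ * ‖x - y‖)
    {xs : En n} (hxs : xs ∈ ArgminSet f g) : (-f' xs) ∈ ESubdiff g xs := by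
  obtain ⟨x₀, hx₀⟩ := hp.2
  have hat : g xs ≠ ⊤ := by
    intro htop
    have h0 := hxs x₀
    rw [htop] at h0
    rw [EReal.coe_add_top] at h0
    have : (f x₀ : EReal) + g x₀ < ⊤ := EReal.add_lt_top (EReal.coe_ne_top _) hx₀
    exact this.ne (top_le_iff.mp h0)
  have hab : g xs ≠ ⊥ := hp.1 xs
  set a := (g xs).toReal
  have hga : g xs = (a : EReal) := (EReal.coe_toReal hat hab).symm
  intro y
  rcases eq_or_ne (g y) ⊤ with hyt | hyt
  · rw [hyt]; exact le_top
  have hyb : g y ≠ ⊥ := hp.1 y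
  set b := (g y).toReal
  have hgb : g y = (b : EReal) := (EReal.coe_toReal hyt hyb).symm
  rw [hga, hgb, ← EReal.coe_add, EReal.coe_le_coe_iff]
  have key : ∀ t : ℝ, 0 < t → t ≤ 1 →
      a + ⟪-f' xs, y - xs⟫ - b ≤ (L₁ * ‖y - xs‖ ^ 2) * t := by
    intro t ht0 ht1
    set yt := xs + t • (y - xs) with hyt'
    have hytc : yt = (1 - t) • xs + t • y := by rw [hyt']; module
    have hconv := hc xs y (1 - t) t (by linarith) ht0.le (by ring)
    rw [hga, hgb] at hconv
    have hconv' : g yt ≤ (((1 - t) * a + t * b : ℝ) : EReal) := by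
      rw [hytc, EReal.coe_add, EReal.coe_mul, EReal.coe_mul]; exact hconv
    have hmin := hxs yt
    have hchain : ((f xs + a : ℝ) : EReal) ≤ ((f yt + ((1 - t) * a + t * b) : ℝ) : EReal) := by
      rw [EReal.coe_add, EReal.coe_add, hga] at *
      exact le_trans hmin (add_le_add_right hconv' _)
    rw [EReal.coe_le_coe_iff] at hchain
    have hsm := smooth_upper hgrad hL hlip xs yt
    have h1 : yt - xs = t • (y - xs) := by rw [hyt']; abel
    rw [h1, real_inner_smul_right] at hsm
    have hip : ⟪-f' xs, y - xs⟫ = -⟪f' xs, y - xs⟫ := by rw [inner_neg_left]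
    rw [hip]
    have hsm' : f yt ≤ f xs + t * ⟪f' xs, y - xs⟫ + L₁ * (t * ‖y - xs‖) ^ 2 := by
      rw [norm_smul] at hsm
      simpa [abs_of_pos ht0] using hsm
    nlinarith [sq_nonneg (‖y - xs‖), sq_nonneg t]
  have := le_zero_of_forall_le_mul key
  linarith

/-- if `-w ∈ ∂g xs` then `xs` is the prox point of `xs - w`. -/
lemma isProxPt_of_subdiff {n : ℕ} {g : En n → EReal} (hp : ProperFun g)
    {xs w : En n} (hw : (-w) ∈ ESubdiff g xs) : IsProxPt g (xs - w) xs := by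
  intro y
  have hat : g xs ≠ ⊤ := subdiff_ne_top hp hw
  have hab : g xs ≠ ⊥ := hp.1 xs
  set a := (g xs).toReal
  have hga : g xs = (a : EReal) := (EReal.coe_toReal hat hab).symm
  rcases eq_or_ne (g y) ⊤ with hyt | hyt
  · rw [hyt, EReal.top_add_coe]; exact le_top
  have hyb : g y ≠ ⊥ := hp.1 y
  set b := (g y).toReal
  have hgb : g y = (b : EReal) := (EReal.coe_toReal hyt hyb).symm
  have hsub := hw y
  rw [hga, hgb, ← EReal.coe_add, EReal.coe_le_coe_iff] at hsub
  rw [hga, hgb, ← EReal.coe_add, ← EReal.coe_add, EReal.coe_le_coe_iff]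
  have h1 : xs - (xs - w) = w := by abel
  have h2 : y - (xs - w) = (y - xs) + w := by abel
  rw [h1, h2, norm_add_sq_real]
  have hsymm : ⟪y - xs, w⟫ = ⟪w, y - xs⟫ := real_inner_comm _ _
  have hneg : ⟪-w, y - xs⟫ = -⟪w, y - xs⟫ := by rw [inner_neg_left]
  rw [hneg] at hsub
  nlinarith [sq_nonneg (‖y - xs‖)]

lemma gmap_zero_of_argmin {n : ℕ} {f : En n → ℝ} {f' : En n → En n} {g : En n → EReal}
    {prox : En n → En n}
    (hp : ProperFun g) (hc : EConvexOn g)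
    (hgrad : ∀ x, HasGradientAt f (f' x) x)
    {L₁ : ℝ} (hL : 0 ≤ L₁) (hlip : ∀ x y : En n, ‖f' x - f' y‖ ≤ L₁ * ‖x - y‖)
    (hprox : IsProxMap g prox)
    {xs : En n} (hxs : xs ∈ ArgminSet f g) : Gmap f' prox xs = 0 := by
  have hv := argmin_subdiff hp hc hgrad hL hlip hxs
  have hpt := isProxPt_of_subdiff hp hv
  have heq := (hprox (xs - f' xs)).2 xs hpt
  rw [Gmap, ← heq, sub_self]

lemma prox_nonexpansive {n : ℕ} {g : En n → EReal} {prox : En n → En n}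
    (hp : ProperFun g) (hc : EConvexOn g) (hprox : IsProxMap g prox) (u₁ u₂ : En n) :
    ‖prox u₁ - prox u₂‖ ≤ ‖u₁ - u₂‖ := by
  set p₁ := prox u₁; set p₂ := prox u₂
  have hs₁ : (u₁ - p₁) ∈ ESubdiff g p₁ := mem_subdiff_of_isProxPt hp hc (hprox u₁).1
  have hs₂ : (u₂ - p₂) ∈ ESubdiff g p₂ := mem_subdiff_of_isProxPt hp hc (hprox u₂).1
  have h := subdiff_mono hp hs₁ hs₂
  have hexp : ⟪u₁ - p₁ - (u₂ - p₂), p₁ - p₂⟫ = ⟪u₁ - u₂, p₁ - p₂⟫ - ‖p₁ - p₂‖ ^ 2 := by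
    have : u₁ - p₁ - (u₂ - p₂) = (u₁ - u₂) - (p₁ - p₂) := by abel
    rw [this, inner_sub_left, real_inner_self_eq_norm_sq]
  rw [hexp] at h
  have hcs := real_inner_le_norm (u₁ - u₂) (p₁ - p₂)
  rcases eq_or_lt_of_le (norm_nonneg (p₁ - p₂)) with h0 | h0
  · rw [← h0]; exact norm_nonneg _
  · nlinarith

set_option maxHeartbeats 2000000 in
/-- Under metric `q`-subregularity of `∇f + ∂g` at `(x̄,0)` with
`q ∈ (0,1]` and local Lipschitz continuity of the Hessian, the inexact proximal Newton
direction satisfies `‖xhat - x‖ ≤ c₁ dist(x, 𝒳*)` near `x̄`. -/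
theorem direction_estimate_q_subregular {n : ℕ}
    (f : En n → ℝ) (f' : En n → En n) (f'' : En n → En n →L[ℝ] En n)
    (g : En n → EReal) (prox : En n → En n)
    (L₁ : ℝ) (hL₁ : 0 < L₁)
    (hfconv : ConvexOn ℝ Set.univ f)
    (hgrad : ∀ x, HasGradientAt f (f' x) x)
    (hhess : ∀ x, HasFDerivAt f' (f'' x) x)
    (hhesscont : Continuous f'')
    (hlip : ∀ x y : En n, ‖f' x - f' y‖ ≤ L₁ * ‖x - y‖)
    (hgproper : ProperFun g) (hglsc : LowerSemicontinuous g) (hgconv : EConvexOn g)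
    (hprox : IsProxMap g prox)
    (hXne : (ArgminSet f g).Nonempty)
    (xbar : En n) (hxbar : xbar ∈ ArgminSet f g)
    (q : ℝ) (hq0 : 0 < q) (hq1 : q ≤ 1)
    (hsubreg : ∃ κ > (0 : ℝ), ∃ ε > (0 : ℝ), ∀ x : En n, ‖x - xbar‖ < ε →
      ∀ v ∈ ESubdiff g x, Metric.infDist x (ArgminSet f g) ≤ κ * ‖f' x + v‖ ^ q)
    (hhesslip : ∃ δ > (0 : ℝ), ∃ L₂ : ℝ, ∀ x ∈ Metric.ball xbar δ, ∀ y ∈ Metric.ball xbar δ,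
      ‖f'' x - f'' y‖ ≤ L₂ * ‖x - y‖)
    (c ᾱ C₁ : ℝ) (hc : 0 < c) (hᾱ : 0 < ᾱ) (hC₁ : 0 < C₁)
    (M : ℝ) (hM : 0 ≤ M)
    (ν : ℝ) (hν0 : 0 ≤ ν) (hν1 : ν < 1)
    (ρ : ℝ) (hρ0 : 0 < ρ) (hρq : ρ ≤ q)
    (ϱ : ℝ) (hϱ : ρ ≤ ϱ) :
    ∃ ε > (0 : ℝ), ∃ c₁ > (0 : ℝ), ∀ x : En n, ‖x - xbar‖ < ε → Gmap f' prox x ≠ 0 →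
      ∀ B : En n →L[ℝ] En n,
        (∀ u v : En n, ⟪B u, v⟫ = ⟪u, B v⟫) → (∀ u : En n, 0 ≤ ⟪B u, u⟫) →
        ‖B‖ ≤ M → ‖B - f'' x‖ ≤ C₁ * Metric.infDist x (ArgminSet f g) →
      ∀ xhat : En n,
        ‖xhat - prox (xhat - f' x - (B (xhat - x) +
            (min ᾱ (c * ‖Gmap f' prox x‖ ^ ρ)) • (xhat - x)))‖ ≤
          ν * min ‖Gmap f' prox x‖ (‖Gmap f' prox x‖ ^ (1 + ϱ)) →
        ‖xhat - x‖ ≤ c₁ * Metric.infDist x (ArgminSet f g) := by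
  obtain ⟨κ, hκ, ε₀, hε₀, hsub⟩ := hsubreg
  obtain ⟨δ, hδ, L₂', hlip2'⟩ := hhesslip
  set L₂ := max L₂' 0 with hL₂def
  have hL₂ : 0 ≤ L₂ := le_max_right _ _
  have hlip2 : ∀ x ∈ ball xbar δ, ∀ y ∈ ball xbar δ, ‖f'' x - f'' y‖ ≤ L₂ * ‖x - y‖ := by
    intro x hx y hy
    exact le_trans (hlip2' x hx y hy)
      (mul_le_mul_of_nonneg_right (le_max_left _ _) (norm_nonneg _))
  have h1L : (0:ℝ) < 1 + L₁ := by linarith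
  have h2L : (0:ℝ) < 2 + L₁ := by linarith
  set C₂ : ℝ := 1 + κ * (1 + L₁) ^ q with hC₂def
  have hC₂ : 0 < C₂ := by
    have := Real.rpow_pos_of_pos h1L q
    positivity
  set t₀ : ℝ := (ᾱ / c) ^ (1 / ρ) with ht₀def
  have ht₀ : 0 < t₀ := Real.rpow_pos_of_pos (by positivity) _
  set ε : ℝ := min (min (ε₀ / (4 + L₁)) (δ / 4)) (min (1 / (2 + L₁)) (t₀ / (2 + L₁))) with hεdef
  have hε : 0 < ε := by
    apply lt_min (lt_min (by positivity) (by positivity)) (lt_min (by positivity) (by positivity))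
  have hCρ : 0 < C₂ ^ (ρ / q) := Real.rpow_pos_of_pos hC₂ _
  set Ka : ℝ := (1 + M + ᾱ) * (ν / c) * (2 + L₁) with hKa
  set Kb : ℝ := (4 * L₂ + 2 * C₁) * (C₂ ^ (ρ / q) / c) with hKb
  have hKa0 : 0 ≤ Ka := by positivity
  have hKb0 : 0 ≤ Kb := by positivity
  set c₁ : ℝ := Ka + Kb + 4 + ν * (2 + L₁) + 1 with hc₁def
  have hc₁ : 0 < c₁ := by positivity
  refine ⟨ε, hε, c₁, hc₁, ?_⟩
  intro x hxε hG B hBsymm hBpsd hBM hBC xhat he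
  set S := Metric.infDist x (ArgminSet f g) with hSdef
  set γ := ‖Gmap f' prox x‖ with hγdef
  have hγ : 0 < γ := norm_pos_iff.mpr hG
  -- Lipschitz-type bound for the prox-gradient mapping against argmin points
  have hGdist : ∀ w ∈ ArgminSet f g, γ ≤ (2 + L₁) * dist x w := by
    intro w hw
    have hGw : Gmap f' prox w = 0 :=
      gmap_zero_of_argmin hgproper hgconv hgrad hL₁.le hlip hprox hw
    have hsplit : Gmap f' prox x =
        (x - w) - (prox (x - f' x) - prox (w - f' w)) + Gmap f' prox w := by
      simp only [Gmap]; abel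
    have h1 : γ ≤ ‖x - w‖ + ‖prox (x - f' x) - prox (w - f' w)‖ := by
      rw [hγdef, hsplit, hGw, add_zero]
      exact norm_sub_le _ _
    have h2 : ‖prox (x - f' x) - prox (w - f' w)‖ ≤ ‖(x - f' x) - (w - f' w)‖ :=
      prox_nonexpansive hgproper hgconv hprox _ _
    have h3 : ‖(x - f' x) - (w - f' w)‖ ≤ ‖x - w‖ + ‖f' x - f' w‖ := by
      have : (x - f' x) - (w - f' w) = (x - w) - (f' x - f' w) := by abel
      rw [this]; exact norm_sub_le _ _
    have h4 : ‖f' x - f' w‖ ≤ L₁ * ‖x - w‖ := hlip x w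
    rw [dist_eq_norm]
    have : (2 + L₁) * ‖x - w‖ = ‖x - w‖ + (‖x - w‖ + L₁ * ‖x - w‖) := by ring
    rw [this]
    linarith only [h1, h2, h3, h4]
  have hγS : γ ≤ (2 + L₁) * S := by
    by_contra hcon
    push_neg at hcon
    have hlt : S < γ / (2 + L₁) := by rw [lt_div_iff₀ h2L]; linarith only [hcon]
    obtain ⟨w, hw, hdw⟩ := (infDist_lt_iff hXne).mp hlt
    have h1 := hGdist w hw
    have h2 : (2 + L₁) * dist x w < (2 + L₁) * (γ / (2 + L₁)) :=
      mul_lt_mul_of_pos_left hdw h2L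
    rw [mul_div_cancel₀ _ h2L.ne'] at h2
    linarith only [h1, h2]
  have hS0 : 0 < S := by
    by_contra hS
    push_neg at hS
    have : (2 + L₁) * S ≤ 0 := mul_nonpos_of_nonneg_of_nonpos h2L.le hS
    linarith only [hγ, hγS, this]
  have hSx : S ≤ ‖x - xbar‖ := by
    rw [hSdef, ← dist_eq_norm]; exact infDist_le_dist_of_mem hxbar
  have hε1 : ‖x - xbar‖ < ε₀ / (4 + L₁) :=
    lt_of_lt_of_le hxε (le_trans (min_le_left _ _) (min_le_left _ _))
  have hε2 : ‖x - xbar‖ < δ / 4 :=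
    lt_of_lt_of_le hxε (le_trans (min_le_left _ _) (min_le_right _ _))
  have hε3 : ‖x - xbar‖ < 1 / (2 + L₁) :=
    lt_of_lt_of_le hxε (le_trans (min_le_right _ _) (min_le_left _ _))
  have hε4 : ‖x - xbar‖ < t₀ / (2 + L₁) :=
    lt_of_lt_of_le hxε (le_trans (min_le_right _ _) (min_le_right _ _))
  have hγx : γ ≤ (2 + L₁) * ‖x - xbar‖ :=
    le_trans hγS (mul_le_mul_of_nonneg_left hSx h2L.le)
  have hγ1 : γ < 1 := by
    have : (2 + L₁) * ‖x - xbar‖ < (2 + L₁) * (1 / (2 + L₁)) :=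
      mul_lt_mul_of_pos_left hε3 h2L
    rw [mul_one_div, div_self h2L.ne'] at this
    linarith only [this, hγx]
  have hS1 : S < 1 := by
    have h12 : 1 / (2 + L₁) ≤ 1 := by
      rw [div_le_one h2L]; linarith only [hL₁]
    linarith only [hSx, hε3, h12]
  have hγt₀ : γ < t₀ := by
    have : (2 + L₁) * ‖x - xbar‖ < (2 + L₁) * (t₀ / (2 + L₁)) :=
      mul_lt_mul_of_pos_left hε4 h2L
    rw [mul_div_cancel₀ _ h2L.ne'] at this
    linarith only [this, hγx]
  have hαval : min ᾱ (c * γ ^ ρ) = c * γ ^ ρ := by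
    apply min_eq_right
    have h1 : γ ^ ρ ≤ t₀ ^ ρ := Real.rpow_le_rpow hγ.le hγt₀.le hρ0.le
    have h2 : t₀ ^ ρ = ᾱ / c := by
      rw [ht₀def, ← Real.rpow_mul (by positivity), one_div_mul_cancel hρ0.ne', Real.rpow_one]
    rw [h2] at h1
    calc c * γ ^ ρ ≤ c * (ᾱ / c) := mul_le_mul_of_nonneg_left h1 hc.le
      _ = ᾱ := by field_simp
  set α := min ᾱ (c * γ ^ ρ) with hαdef
  have hαc : α = c * γ ^ ρ := hαval
  have hα0 : 0 < α := by
    rw [hαc]; exact mul_pos hc (Real.rpow_pos_of_pos hγ _)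
  have hαᾱ : α ≤ ᾱ := min_le_left _ _
  -- subregularity at the prox point z
  set z := prox (x - f' x) with hzdef
  have hxzγ : ‖x - z‖ = γ := by rw [hγdef]; rfl
  have hzx : ‖z - xbar‖ < ε₀ := by
    have h1 : ‖z - xbar‖ ≤ ‖z - x‖ + ‖x - xbar‖ := norm_sub_le_norm_sub_add_norm_sub _ _ _
    have h2 : ‖z - x‖ = γ := by rw [norm_sub_rev]; exact hxzγ
    have h3 : ‖z - xbar‖ ≤ (3 + L₁) * ‖x - xbar‖ := by linarith only [h1, h2, hγx]
    have h4 : (3 + L₁) * ‖x - xbar‖ < (3 + L₁) * (ε₀ / (4 + L₁)) := by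
      apply mul_lt_mul_of_pos_left hε1 (by linarith)
    have h5 : (3 + L₁) * (ε₀ / (4 + L₁)) ≤ ε₀ := by
      have h6 : (3 + L₁) * (ε₀ / (4 + L₁)) ≤ (4 + L₁) * (ε₀ / (4 + L₁)) :=
        mul_le_mul_of_nonneg_right (by linarith only [hL₁]) (by positivity)
      have h7 : (4 + L₁) * (ε₀ / (4 + L₁)) = ε₀ := by field_simp
      linarith only [h6, h7]
    linarith only [h3, h4, h5]
  have hv : ((x - f' x) - z) ∈ ESubdiff g z :=
    mem_subdiff_of_isProxPt hgproper hgconv (hprox _).1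
  have hsubz := hsub z hzx _ hv
  have hnormv : ‖f' z + ((x - f' x) - z)‖ ≤ (1 + L₁) * γ := by
    have hre : f' z + ((x - f' x) - z) = (f' z - f' x) + (x - z) := by abel
    rw [hre]
    calc ‖(f' z - f' x) + (x - z)‖ ≤ ‖f' z - f' x‖ + ‖x - z‖ := norm_add_le _ _
      _ ≤ L₁ * ‖z - x‖ + γ := by rw [hxzγ]; exact add_le_add_left (hlip z x) _
      _ = (1 + L₁) * γ := by rw [norm_sub_rev, hxzγ]; ring
  have hSz : S ≤ C₂ * γ ^ q := by
    have h1 : S ≤ infDist z (ArgminSet f g) + dist x z := infDist_le_infDist_add_dist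
    have h2 := hsubz
    have h3 : κ * ‖f' z + ((x - f' x) - z)‖ ^ q ≤ κ * ((1 + L₁) * γ) ^ q :=
      mul_le_mul_of_nonneg_left (Real.rpow_le_rpow (norm_nonneg _) hnormv hq0.le) hκ.le
    have h4 : ((1 + L₁) * γ) ^ q = (1 + L₁) ^ q * γ ^ q := Real.mul_rpow h1L.le hγ.le
    have h5 : γ ≤ γ ^ q := by
      have := Real.rpow_le_rpow_of_exponent_ge hγ hγ1.le hq1
      rwa [Real.rpow_one] at this
    have h6 : dist x z = γ := by rw [dist_eq_norm]; exact hxzγ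
    rw [h4] at h3
    rw [hC₂def]
    linarith only [h1, h2, h3, h5, h6]
  have hγqS : S / C₂ ≤ γ ^ q := (div_le_iff₀ hC₂).mpr (by linarith only [hSz])
  have hαS : c * (S ^ (ρ / q) / C₂ ^ (ρ / q)) ≤ α := by
    rw [hαc]
    have h2 : (S / C₂) ^ (ρ / q) ≤ (γ ^ q) ^ (ρ / q) :=
      Real.rpow_le_rpow (by positivity) hγqS (by positivity)
    have h3 : (γ ^ q) ^ (ρ / q) = γ ^ ρ := by
      rw [← Real.rpow_mul hγ.le]
      congr 1
      field_simp
    have h4 : (S / C₂) ^ (ρ / q) = S ^ (ρ / q) / C₂ ^ (ρ / q) :=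
      Real.div_rpow hS0.le hC₂.le _
    rw [← h4]
    rw [← h3]
    exact mul_le_mul_of_nonneg_left h2 hc.le
  -- the inexact step
  set d := xhat - x with hddef
  set p := prox (xhat - f' x - (B d + α • d)) with hpdef
  set e := xhat - p with hedef
  have hE1 : ‖e‖ ≤ ν * γ :=
    le_trans he (mul_le_mul_of_nonneg_left (min_le_left _ _) hν0)
  have hE2 : ‖e‖ ≤ ν / c * α * γ := by
    have h1 : ‖e‖ ≤ ν * γ ^ (1 + ϱ) :=
      le_trans he (mul_le_mul_of_nonneg_left (min_le_right _ _) hν0)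
    have h2 : γ ^ (1 + ϱ) = γ ^ ρ * γ ^ (1 + ϱ - ρ) := by
      rw [← Real.rpow_add hγ]; ring_nf
    have h3 : γ ^ (1 + ϱ - ρ) ≤ γ := by
      have := Real.rpow_le_rpow_of_exponent_ge hγ hγ1.le (by linarith : (1:ℝ) ≤ 1 + ϱ - ρ)
      rwa [Real.rpow_one] at this
    have h4 : (0:ℝ) ≤ γ ^ ρ := (Real.rpow_pos_of_pos hγ ρ).le
    calc ‖e‖ ≤ ν * (γ ^ ρ * γ ^ (1 + ϱ - ρ)) := by rw [← h2]; exact h1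
      _ ≤ ν * (γ ^ ρ * γ) := by
          apply mul_le_mul_of_nonneg_left (mul_le_mul_of_nonneg_left h3 h4) hν0
      _ = ν / c * (c * γ ^ ρ) * γ := by field_simp
      _ = ν / c * α * γ := by rw [hαc]
  -- nearest-ish argmin point
  obtain ⟨xs, hxs, hdxs⟩ := (infDist_lt_iff hXne).mp (show S < 2 * S by linarith only [hS0])
  set s := x - xs with hsdef
  have hsn : ‖s‖ < 2 * S := by rw [hsdef, ← dist_eq_norm]; exact hdxs
  have hsn0 : 0 ≤ ‖s‖ := norm_nonneg _
  -- membership in the Hessian-Lipschitz ball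
  have hxball : x ∈ ball xbar δ := by
    rw [mem_ball, dist_eq_norm]; linarith only [hε2, hδ]
  have hxsball : xs ∈ ball xbar δ := by
    rw [mem_ball, dist_eq_norm]
    have h1 : ‖xs - xbar‖ ≤ ‖xs - x‖ + ‖x - xbar‖ := norm_sub_le_norm_sub_add_norm_sub _ _ _
    have h2 : ‖xs - x‖ = ‖s‖ := by rw [hsdef, norm_sub_rev]
    linarith only [h1, h2, hsn, hSx, hε2, hδ]
  -- subgradient relations
  have hvp : (xhat - f' x - (B d + α • d) - p) ∈ ESubdiff g p :=
    mem_subdiff_of_isProxPt hgproper hgconv (hprox _).1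
  have hvxs : (-f' xs) ∈ ESubdiff g xs :=
    argmin_subdiff hgproper hgconv hgrad hL₁.le hlip hxs
  have hmono := subdiff_mono hgproper hvp hvxs
  set w := p - xs with hwdef
  set V := (e - B e - α • e) + (f' xs - f' x - f'' x (xs - x)) +
      ((B s - f'' x s) + (f'' x s - f'' x s) + α • s) with hVdef
  have hfs : f'' x (xs - x) = -(f'' x s) := by
    rw [hsdef, ← map_neg]; congr 1; abel
  have hkey : (xhat - f' x - (B d + α • d) - p) - (-f' xs) = V - (B w + α • w) := by
    have hd : d = w + e - s := by rw [hddef, hwdef, hedef, hsdef]; abel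
    rw [hVdef, hfs, hd]
    simp only [hedef, hwdef, hsdef, map_sub, map_add, smul_sub, smul_add]
    abel
  rw [hkey] at hmono
  have hsplit : ⟪V - (B w + α • w), w⟫ = ⟪V, w⟫ - ⟪B w, w⟫ - α * ‖w‖ ^ 2 := by
    simp only [inner_sub_left, inner_add_left, real_inner_smul_left,
      real_inner_self_eq_norm_sq]
    ring
  rw [hsplit] at hmono
  have hww : α * ‖w‖ ^ 2 ≤ ⟪V, w⟫ := by
    have := hBpsd w
    linarith only [hmono, this]
  have hVw : ⟪V, w⟫ ≤ ‖V‖ * ‖w‖ := real_inner_le_norm _ _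
  have hwb : α * ‖w‖ ≤ ‖V‖ := by
    rcases eq_or_lt_of_le (norm_nonneg w) with h0 | h0
    · rw [← h0, mul_zero]; exact norm_nonneg _
    · nlinarith only [hww, hVw, h0]
  -- norm bound on V
  have hBe : ‖B e‖ ≤ M * ‖e‖ :=
    le_trans (B.le_opNorm e) (mul_le_mul_of_nonneg_right hBM (norm_nonneg _))
  have hαe : ‖α • e‖ ≤ ᾱ * ‖e‖ := by
    rw [norm_smul, Real.norm_eq_abs, abs_of_pos hα0]
    exact mul_le_mul_of_nonneg_right hαᾱ (norm_nonneg _)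
  have hV1 : ‖e - B e - α • e‖ ≤ (1 + M + ᾱ) * ‖e‖ := by
    calc ‖e - B e - α • e‖ ≤ ‖e - B e‖ + ‖α • e‖ := norm_sub_le _ _
      _ ≤ (‖e‖ + ‖B e‖) + ‖α • e‖ := by
          exact add_le_add_left (norm_sub_le _ _) _
      _ ≤ (‖e‖ + M * ‖e‖) + ᾱ * ‖e‖ := by
          exact add_le_add (add_le_add_right hBe _) hαe
      _ = (1 + M + ᾱ) * ‖e‖ := by ring
  have hV2 : ‖f' xs - f' x - f'' x (xs - x)‖ ≤ L₂ * ‖s‖ ^ 2 := by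
    have := taylor_grad hhess hL₂ hlip2 hxball hxsball
    have h2 : ‖xs - x‖ = ‖s‖ := by rw [hsdef, norm_sub_rev]
    rw [h2] at this
    exact this
  have hV3 : ‖B s - f'' x s‖ ≤ C₁ * S * ‖s‖ := by
    have h1 : B s - f'' x s = (B - f'' x) s := by
      rw [ContinuousLinearMap.sub_apply]
    rw [h1]
    calc ‖(B - f'' x) s‖ ≤ ‖B - f'' x‖ * ‖s‖ := (B - f'' x).le_opNorm s
      _ ≤ C₁ * S * ‖s‖ := mul_le_mul_of_nonneg_right hBC (norm_nonneg _)
  have hV4 : ‖α • s‖ = α * ‖s‖ := by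
    rw [norm_smul, Real.norm_eq_abs, abs_of_pos hα0]
  have hVb : ‖V‖ ≤ (1 + M + ᾱ) * ‖e‖ + L₂ * ‖s‖ ^ 2 + C₁ * S * ‖s‖ + α * ‖s‖ := by
    rw [hVdef]
    have hzero : f'' x s - f'' x s = 0 := sub_self _
    rw [hzero, add_zero]
    calc ‖(e - B e - α • e) + (f' xs - f' x - f'' x (xs - x)) + ((B s - f'' x s) + α • s)‖
        ≤ ‖(e - B e - α • e) + (f' xs - f' x - f'' x (xs - x))‖ + ‖(B s - f'' x s) + α • s‖ :=
          norm_add_le _ _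
      _ ≤ (‖e - B e - α • e‖ + ‖f' xs - f' x - f'' x (xs - x)‖) +
            (‖B s - f'' x s‖ + ‖α • s‖) :=
          add_le_add (norm_add_le _ _) (norm_add_le _ _)
      _ ≤ (1 + M + ᾱ) * ‖e‖ + L₂ * ‖s‖ ^ 2 + C₁ * S * ‖s‖ + α * ‖s‖ := by
          rw [hV4]
          linarith only [hV1, hV2, hV3]
  -- numeric assembly: ‖V‖ ≤ (Ka + Kb + 2) * α * S
  have hSSα : S * S ≤ C₂ ^ (ρ / q) / c * α * S := by
    have h1 : S ≤ S ^ (ρ / q) := by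
      have := Real.rpow_le_rpow_of_exponent_ge hS0 hS1.le
        ((div_le_one hq0).mpr hρq)
      rwa [Real.rpow_one] at this
    have h2 : S ^ (ρ / q) ≤ C₂ ^ (ρ / q) / c * α := by
      have hid : S ^ (ρ / q) = C₂ ^ (ρ / q) / c * (c * (S ^ (ρ / q) / C₂ ^ (ρ / q))) := by
        field_simp
      rw [hid]
      exact mul_le_mul_of_nonneg_left hαS (by positivity)
    calc S * S ≤ S ^ (ρ / q) * S := mul_le_mul_of_nonneg_right h1 hS0.le
      _ ≤ (C₂ ^ (ρ / q) / c * α) * S := mul_le_mul_of_nonneg_right h2 hS0.le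
      _ = C₂ ^ (ρ / q) / c * α * S := by ring
  have hterm1 : (1 + M + ᾱ) * ‖e‖ ≤ Ka * α * S := by
    have h1 : ‖e‖ ≤ ν / c * α * ((2 + L₁) * S) := by
      refine le_trans hE2 ?_
      apply mul_le_mul_of_nonneg_left hγS (by positivity)
    rw [hKa]
    calc (1 + M + ᾱ) * ‖e‖ ≤ (1 + M + ᾱ) * (ν / c * α * ((2 + L₁) * S)) :=
          mul_le_mul_of_nonneg_left h1 (by positivity)
      _ = (1 + M + ᾱ) * (ν / c) * (2 + L₁) * α * S := by ring
  have hterm2 : L₂ * ‖s‖ ^ 2 + C₁ * S * ‖s‖ ≤ Kb * α * S := by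
    have h1 : ‖s‖ ^ 2 ≤ 4 * (S * S) := by nlinarith only [hsn, hsn0]
    have h2 : S * ‖s‖ ≤ 2 * (S * S) := by nlinarith only [hsn, hS0]
    have h3 : L₂ * ‖s‖ ^ 2 + C₁ * S * ‖s‖ ≤ (4 * L₂ + 2 * C₁) * (S * S) := by
      nlinarith only [h1, h2, hL₂, hC₁]
    rw [hKb]
    calc L₂ * ‖s‖ ^ 2 + C₁ * S * ‖s‖ ≤ (4 * L₂ + 2 * C₁) * (S * S) := h3
      _ ≤ (4 * L₂ + 2 * C₁) * (C₂ ^ (ρ / q) / c * α * S) :=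
          mul_le_mul_of_nonneg_left hSSα (by positivity)
      _ = (4 * L₂ + 2 * C₁) * (C₂ ^ (ρ / q) / c) * α * S := by ring
  have hterm3 : α * ‖s‖ ≤ 2 * α * S := by nlinarith only [hsn, hα0]
  have hVfinal : ‖V‖ ≤ (Ka + Kb + 2) * α * S := by
    linarith only [hVb, hterm1, hterm2, hterm3]
  have hwS : ‖w‖ ≤ (Ka + Kb + 2) * S := by
    have h1 : α * ‖w‖ ≤ α * ((Ka + Kb + 2) * S) := by
      calc α * ‖w‖ ≤ ‖V‖ := hwb
        _ ≤ (Ka + Kb + 2) * α * S := hVfinal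
        _ = α * ((Ka + Kb + 2) * S) := by ring
    exact le_of_mul_le_mul_left h1 hα0
  -- conclusion
  have hfin : d = w + e - s := by rw [hddef, hwdef, hedef, hsdef]; abel
  have hdb : ‖d‖ ≤ ‖w‖ + ‖e‖ + ‖s‖ := by
    rw [hfin]
    calc ‖w + e - s‖ ≤ ‖w + e‖ + ‖s‖ := norm_sub_le _ _
      _ ≤ ‖w‖ + ‖e‖ + ‖s‖ := add_le_add_left (norm_add_le _ _) _
  have hEb : ‖e‖ ≤ ν * (2 + L₁) * S := by
    calc ‖e‖ ≤ ν * γ := hE1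
      _ ≤ ν * ((2 + L₁) * S) := mul_le_mul_of_nonneg_left hγS hν0
      _ = ν * (2 + L₁) * S := by ring
  calc ‖d‖ ≤ ‖w‖ + ‖e‖ + ‖s‖ := hdb
    _ ≤ (Ka + Kb + 2) * S + ν * (2 + L₁) * S + 2 * S := by
        linarith only [hwS, hEb, hsn]
    _ ≤ c₁ * S := by rw [hc₁def]; linarith only [hS0]
end
end
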